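/- arXiv:math/0610468 — 4 statements merged into one kernel-verified Lean document; each statement's English description precedes it below -/
import Mathlib

section
/- S has the universal property of the crossed product A ⋊_σ ℤ₂: for every unital C*-algebra B, every unital *-homomorphism φ : A → B, and every unitary u ∈ B with u² = 1 and u φ(a) u = φ(σ(a)) for all a ∈ A, there exists a unique unital *-homomorphism Φ : S → B such that Φ(ψ(a)) = φ(a) for all a ∈ A and Φ(W) = u; explicitly Φ([[a, b], [σ(b), σ(a)]]) = φ(a) + φ(b)·u. -/
open Matrix

variable {A : Type*} [CStarAlgebra A]

/-- The concrete crossed product `S = {[[a, b], [σ b, σ a]] : a, b ∈ A} ⊆ M₂(A)`,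
described by the entry conditions `M 1 1 = σ (M 0 0)` and `M 1 0 = σ (M 0 1)`,
as a (star-closed unital) *-subalgebra of `M₂(A)`. -/
def crossedProduct (σ : A →⋆ₐ[ℂ] A) (hσ : ∀ x, σ (σ x) = x) :
    StarSubalgebra ℂ (Matrix (Fin 2) (Fin 2) A) where
  carrier := {M | M 1 1 = σ (M 0 0) ∧ M 1 0 = σ (M 0 1)}
  add_mem' := by
    rintro M N ⟨hM1, hM2⟩ ⟨hN1, hN2⟩
    constructor <;> simp [Matrix.add_apply, map_add, hM1, hM2, hN1, hN2]
  mul_mem' := by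
    rintro M N ⟨hM1, hM2⟩ ⟨hN1, hN2⟩
    have hM1' : σ (M 0 0) = M 1 1 := hM1.symm
    have hM2' : σ (M 0 1) = M 1 0 := hM2.symm
    have hN1' : σ (N 0 0) = N 1 1 := hN1.symm
    have hN2' : σ (N 0 1) = N 1 0 := hN2.symm
    have hN1'' : σ (N 1 1) = N 0 0 := by rw [hN1, hσ]
    have hN2'' : σ (N 1 0) = N 0 1 := by rw [hN2, hσ]
    constructor <;>
      simp only [Matrix.mul_apply, Fin.sum_univ_two, map_add, _root_.map_mul,
        hM1', hM2', hN1', hN2', hN1'', hN2''] <;> abel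
  algebraMap_mem' := fun c =>
    ⟨by simp [Matrix.algebraMap_matrix_apply, AlgHomClass.commutes],
     by simp [Matrix.algebraMap_matrix_apply]⟩
  star_mem' := by
    rintro M ⟨hM1, hM2⟩
    constructor <;> simp [Matrix.star_apply, map_star, hM1, hM2, hσ]

lemma psi_mem_crossedProduct (σ : A →⋆ₐ[ℂ] A) (hσ : ∀ x, σ (σ x) = x) (a : A) :
    !![a, 0; 0, σ a] ∈ crossedProduct σ hσ := by
  constructor <;> simp [crossedProduct]

lemma W_mem_crossedProduct (σ : A →⋆ₐ[ℂ] A) (hσ : ∀ x, σ (σ x) = x) :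
    !![(0 : A), 1; 1, 0] ∈ crossedProduct σ hσ := by
  constructor <;> simp [crossedProduct]

lemma gen_mem_crossedProduct (σ : A →⋆ₐ[ℂ] A) (hσ : ∀ x, σ (σ x) = x) (a b : A) :
    !![a, b; σ b, σ a] ∈ crossedProduct σ hσ := by
  constructor <;> simp [crossedProduct]

lemma key_comm {B : Type*} [CStarAlgebra B] (σ : A →⋆ₐ[ℂ] A) (φ : A →⋆ₐ[ℂ] B)
    (u : B) (hu2 : u * u = 1) (hcov : ∀ a : A, u * φ a * u = φ (σ a)) (x : A) :
    u * φ x = φ (σ x) * u := by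
  conv_rhs => rw [← hcov x]
  rw [mul_assoc, hu2, mul_one]

noncomputable def PhiAux (σ : A →⋆ₐ[ℂ] A) (hσ : ∀ x, σ (σ x) = x)
    {B : Type*} [CStarAlgebra B] (φ : A →⋆ₐ[ℂ] B)
    (u : B) (hu2 : u * u = 1) (hcov : ∀ a : A, u * φ a * u = φ (σ a))
    (hustar : star u = u) :
    ↥(crossedProduct σ hσ) →⋆ₐ[ℂ] B where
  toFun M := φ (M.1 0 0) + φ (M.1 0 1) * u
  map_one' := by
    simp [OneMemClass.coe_one, Matrix.one_apply]
  map_mul' := by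
    rintro ⟨M, hM1, hM2⟩ ⟨N, hN1, hN2⟩
    show φ ((M * N) 0 0) + φ ((M * N) 0 1) * u = _
    simp only [Matrix.mul_apply, Fin.sum_univ_two, hN1, hN2]
    simp only [map_add, _root_.map_mul, add_mul, mul_add]
    rw [mul_assoc (φ (M 0 1)) u (φ (N 0 0)), key_comm σ φ u hu2 hcov (N 0 0),
      mul_assoc (φ (M 0 1)) u (φ (N 0 1) * u), ← mul_assoc u,
      key_comm σ φ u hu2 hcov (N 0 1), mul_assoc (φ (σ (N 0 1))) u u, hu2, mul_one]
    simp only [mul_assoc]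
    abel
  map_zero' := by simp
  map_add' := by
    rintro ⟨M, hM⟩ ⟨N, hN⟩
    simp only [AddMemClass.mk_add_mk, Matrix.add_apply, map_add, add_mul]
    abel
  commutes' := fun c => by
    simp [Matrix.algebraMap_matrix_apply, Algebra.algebraMap_eq_smul_one]
  map_star' := by
    rintro ⟨M, hM1, hM2⟩
    have h1 : star (φ (M 0 0) + φ (M 0 1) * u)
        = φ (star (M 0 0)) + u * φ (star (M 0 1)) := by
      simp [star_add, StarMul.star_mul, map_star, hustar]
    show φ ((star M) 0 0) + φ ((star M) 0 1) * u = _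
    simp only [Matrix.star_apply, hM2, map_star]
    rw [h1, key_comm σ φ u hu2 hcov (star (M 0 1))]
    simp [map_star]

/-- `S` has the universal property of the crossed product `A ⋊_σ ℤ₂`:
for every unital C*-algebra `B`, every unital *-homomorphism `φ : A → B` and every
unitary `u ∈ B` with `u² = 1` and `u φ(a) u = φ(σ a)` for all `a`, there is a unique
unital *-homomorphism `Φ : S → B` with `Φ (ψ a) = φ a` for all `a ∈ A` and `Φ W = u`;
explicitly `Φ [[a, b], [σ b, σ a]] = φ a + φ b · u`. -/
theorem stmt2 (σ : A →⋆ₐ[ℂ] A) (hσ : ∀ x, σ (σ x) = x)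
    {B : Type*} [CStarAlgebra B] (φ : A →⋆ₐ[ℂ] B)
    (u : B) (hu : u ∈ unitary B) (hu2 : u * u = 1)
    (hcov : ∀ a : A, u * φ a * u = φ (σ a)) :
    (∃! Φ : ↥(crossedProduct σ hσ) →⋆ₐ[ℂ] B,
      (∀ a : A, Φ ⟨!![a, 0; 0, σ a], psi_mem_crossedProduct σ hσ a⟩ = φ a) ∧
      Φ ⟨!![(0 : A), 1; 1, 0], W_mem_crossedProduct σ hσ⟩ = u) ∧
    (∀ Φ : ↥(crossedProduct σ hσ) →⋆ₐ[ℂ] B,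
      ((∀ a : A, Φ ⟨!![a, 0; 0, σ a], psi_mem_crossedProduct σ hσ a⟩ = φ a) ∧
        Φ ⟨!![(0 : A), 1; 1, 0], W_mem_crossedProduct σ hσ⟩ = u) →
      ∀ a b : A, Φ ⟨!![a, b; σ b, σ a], gen_mem_crossedProduct σ hσ a b⟩ = φ a + φ b * u) := by
  have hustar : star u = u := by
    have h := (Unitary.mem_iff.mp hu).1
    calc star u = star u * (u * u) := by rw [hu2, mul_one]
      _ = (star u * u) * u := by rw [mul_assoc]
      _ = u := by rw [h, one_mul]
  set Φ₀ := PhiAux σ hσ φ u hu2 hcov hustar with hΦ₀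
  have hformula : ∀ (M : crossedProduct σ hσ),
      Φ₀ M = φ (M.1 0 0) + φ (M.1 0 1) * u := fun _ => rfl
  have hψ : ∀ a : A, Φ₀ ⟨!![a, 0; 0, σ a], psi_mem_crossedProduct σ hσ a⟩ = φ a := by
    intro a; rw [hformula]; simp
  have hW : Φ₀ ⟨!![(0 : A), 1; 1, 0], W_mem_crossedProduct σ hσ⟩ = u := by
    rw [hformula]; simp
  have huniq : ∀ Φ : ↥(crossedProduct σ hσ) →⋆ₐ[ℂ] B,
      ((∀ a : A, Φ ⟨!![a, 0; 0, σ a], psi_mem_crossedProduct σ hσ a⟩ = φ a) ∧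
        Φ ⟨!![(0 : A), 1; 1, 0], W_mem_crossedProduct σ hσ⟩ = u) →
      ∀ M : ↥(crossedProduct σ hσ), Φ M = φ (M.1 0 0) + φ (M.1 0 1) * u := by
    rintro Φ ⟨hΦψ, hΦW⟩ ⟨M, hM1, hM2⟩
    have hdec : (⟨M, hM1, hM2⟩ : crossedProduct σ hσ)
        = ⟨!![M 0 0, 0; 0, σ (M 0 0)], psi_mem_crossedProduct σ hσ (M 0 0)⟩
          + ⟨!![M 0 1, 0; 0, σ (M 0 1)], psi_mem_crossedProduct σ hσ (M 0 1)⟩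
            * ⟨!![(0 : A), 1; 1, 0], W_mem_crossedProduct σ hσ⟩ := by
      apply Subtype.ext
      show M = _
      ext i j
      fin_cases i <;> fin_cases j <;>
        simp [Matrix.mul_apply, Fin.sum_univ_two, hM1, hM2]
    conv_lhs => rw [hdec]
    rw [map_add, _root_.map_mul, hΦψ, hΦψ, hΦW]
  refine ⟨⟨Φ₀, ⟨hψ, hW⟩, fun Φ hΦ => ?_⟩, fun Φ hΦ a b => ?_⟩
  · refine DFunLike.ext _ _ fun M => ?_
    rw [huniq Φ hΦ M, hformula]
  · rw [huniq Φ hΦ]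
    simp
end

section
/- Let π : A → B(H) be an injective representation of A. Then the unital *-homomorphism Φ : S → B(H ⊕ H) determined by Φ(ψ(a)) = π(a) ⊕ π(σ(a)) for a ∈ A and Φ(W) = the swap operator (x, y) ↦ (y, x) (i.e. Φ([[a, b], [σ(b), σ(a)]]) is the block operator [[π(a), π(b)], [π(σ(b)), π(σ(a))]]) is injective. -/
open Matrix

noncomputable section

variable {A : Type*} [CStarAlgebra A]

/-- The Hilbert-space direct sum `H ⊕ K`, i.e. the product with the `L²` norm. -/
abbrev HilbertSum (H K : Type*) [NormedAddCommGroup H] [NormedAddCommGroup K] :=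
  WithLp 2 (H × K)

variable {H : Type*} [NormedAddCommGroup H] [InnerProductSpace ℂ H] [CompleteSpace H]

/-- The block-diagonal operator `S ⊕ T` on the Hilbert-space direct sum `H ⊕ H`. -/
def dsum (S T : H →L[ℂ] H) : HilbertSum H H →L[ℂ] HilbertSum H H :=
  (WithLp.prodContinuousLinearEquiv 2 ℂ H H).symm.toContinuousLinearMap ∘L
    (S.prodMap T) ∘L (WithLp.prodContinuousLinearEquiv 2 ℂ H H).toContinuousLinearMap

/-- The swap (flip) unitary `(x, y) ↦ (y, x)` on the Hilbert-space direct sum `H ⊕ H`. -/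
def swapOp (H : Type*) [NormedAddCommGroup H] [InnerProductSpace ℂ H] [CompleteSpace H] :
    HilbertSum H H →L[ℂ] HilbertSum H H :=
  (WithLp.prodContinuousLinearEquiv 2 ℂ H H).symm.toContinuousLinearMap ∘L
    ((ContinuousLinearMap.snd ℂ H H).prod (ContinuousLinearMap.fst ℂ H H)) ∘L
      (WithLp.prodContinuousLinearEquiv 2 ℂ H H).toContinuousLinearMap

/-- Let `π : A → B(H)` be an injective representation of `A`.  Then the
unital *-homomorphism `Φ : S → B(H ⊕ H)` determined by `Φ (ψ a) = π a ⊕ π (σ a)` and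
`Φ(W) = ` the swap operator — explicitly sending `[[a, b], [σ b, σ a]]` to the block
operator `[[π a, π b], [π (σ b), π (σ a)]]` — is injective. -/
theorem stmt5 (σ : A →⋆ₐ[ℂ] A) (hσ : ∀ x, σ (σ x) = x)
    (π : A →⋆ₐ[ℂ] (H →L[ℂ] H)) (hπ : Function.Injective π) :
    Function.Injective (fun M : ↥(crossedProduct σ hσ) =>
      dsum (π (M.1 0 0)) (π (M.1 1 1)) +
        dsum (π (M.1 0 1)) (π (M.1 1 0)) * swapOp H) := by
  intro M N h
  simp only at h
  have hv : ∀ (x y : H),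
      (π (M.1 0 0) x + π (M.1 0 1) y = π (N.1 0 0) x + π (N.1 0 1) y) ∧
      (π (M.1 1 1) y + π (M.1 1 0) x = π (N.1 1 1) y + π (N.1 1 0) x) := by
    intro x y
    have h2 := congrArg (fun F : HilbertSum H H →L[ℂ] HilbertSum H H =>
      WithLp.prodContinuousLinearEquiv 2 ℂ H H
        (F ((WithLp.prodContinuousLinearEquiv 2 ℂ H H).symm (x, y)))) h
    simpa [dsum, swapOp, Prod.ext_iff, ContinuousLinearMap.mul_apply] using h2
  have h00 : M.1 0 0 = N.1 0 0 := hπ (ContinuousLinearMap.ext fun x => by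
    simpa using (hv x 0).1)
  have h10 : M.1 1 0 = N.1 1 0 := hπ (ContinuousLinearMap.ext fun x => by
    simpa using (hv x 0).2)
  have h01 : M.1 0 1 = N.1 0 1 := hπ (ContinuousLinearMap.ext fun y => by
    simpa using (hv 0 y).1)
  have h11 : M.1 1 1 = N.1 1 1 := hπ (ContinuousLinearMap.ext fun y => by
    simpa using (hv 0 y).2)
  exact Subtype.ext (Matrix.ext fun i j => by
    fin_cases i <;> fin_cases j <;> assumption)

end
end

section
/- Let H be a complex Hilbert space and let A, B be bounded linear operators on H such that B T A = A T B for every bounded linear operator T on H. Then A and B are linearly dependent: there exists λ ∈ ℂ with B = λA or A = λB. -/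
/-!
Testing the identity `B T A = A T B` on the rank-one operators `T = f(·) u` gives
`f (A z) • B u = f (B z) • A u` for all vectors `u, z` and continuous functionals `f`.
If `A ≠ 0`, pick `z` with `A z ≠ 0` and, since continuous functionals separate points
(Hahn–Banach), `f` with `f (A z) ≠ 0`; then `B = (f (B z) / f (A z)) • A`.
-/

namespace ContinuousLinearMap

variable {𝕜 V : Type*} [Field 𝕜] [TopologicalSpace 𝕜] [AddCommGroup V] [TopologicalSpace V]
  [Module 𝕜 V] [ContinuousSMul 𝕜 V]

theorem mul_smulRight_mul_apply (A B : V →L[𝕜] V) (f : V →L[𝕜] 𝕜) (u z : V) :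
    (B * f.smulRight u * A) z = f (A z) • B u := by
  simp

theorem smul_apply_eq_smul_apply_of_forall_mul_mul_comm {A B : V →L[𝕜] V}
    (h : ∀ T : V →L[𝕜] V, B * T * A = A * T * B) (f : V →L[𝕜] 𝕜) (u z : V) :
    f (A z) • B u = f (B z) • A u := by
  rw [← mul_smulRight_mul_apply, ← mul_smulRight_mul_apply, h]

theorem eq_smul_of_forall_mul_mul_comm {A B : V →L[𝕜] V}
    (h : ∀ T : V →L[𝕜] V, B * T * A = A * T * B) {f : V →L[𝕜] 𝕜} {z : V}
    (hf : f (A z) ≠ 0) : B = (f (B z) / f (A z)) • A := by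
  ext u
  rw [smul_apply, div_eq_inv_mul, mul_smul,
    ← smul_apply_eq_smul_apply_of_forall_mul_mul_comm h, inv_smul_smul₀ hf]

theorem exists_eq_smul_of_forall_mul_mul_comm [SeparatingDual 𝕜 V] {A B : V →L[𝕜] V}
    (h : ∀ T : V →L[𝕜] V, B * T * A = A * T * B) (hA : A ≠ 0) : ∃ l : 𝕜, B = l • A := by
  obtain ⟨z, hz⟩ : ∃ z, A z ≠ 0 := by
    by_contra! hAz
    exact hA (ext hAz)
  obtain ⟨f, hf⟩ := SeparatingDual.exists_ne_zero (R := 𝕜) hz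
  exact ⟨_, eq_smul_of_forall_mul_mul_comm h hf⟩

end ContinuousLinearMap

theorem stmt6_general {H : Type*} [NormedAddCommGroup H] [InnerProductSpace ℂ H]
    (A B : H →L[ℂ] H) (h : ∀ T : H →L[ℂ] H, B * T * A = A * T * B) :
    (∃ l : ℂ, B = l • A) ∨ (∃ l : ℂ, A = l • B) := by
  by_cases hA : A = 0
  · exact Or.inr ⟨0, by simp [hA]⟩
  · exact Or.inl (ContinuousLinearMap.exists_eq_smul_of_forall_mul_mul_comm h hA)

/-- Let `H` be a complex Hilbert space and `A, B` bounded linear operators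
on `H` such that `B T A = A T B` for every bounded linear operator `T` on `H`.  Then `A` and
`B` are linearly dependent: `B = λ • A` or `A = λ • B` for some `λ ∈ ℂ`. -/
theorem stmt6 {H : Type*} [NormedAddCommGroup H] [InnerProductSpace ℂ H] [CompleteSpace H]
    (A B : H →L[ℂ] H) (h : ∀ T : H →L[ℂ] H, B * T * A = A * T * B) :
    (∃ l : ℂ, B = l • A) ∨ (∃ l : ℂ, A = l • B) :=
  stmt6_general A B h
end

section
/- Let H be a complex Hilbert space and let A, B be bounded linear operators on H such that A T A* = B T B* for every bounded linear operator T on H. Then there exists θ ∈ [0, 1) such that B = exp(2πiθ)·A. -/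
open scoped Real InnerProductSpace

/-!
Testing `A T A* = B T B*` on the rank-one operators `w ↦ ⟪y, w⟫ • x` gives
`⟪A y, z⟫ • A x = ⟪B y, z⟫ • B x` for all `x, y, z`, which forces `B = c • A` for a scalar `c`.
Testing on `T = 1` then gives `A A* = |c|² A A*`, and since `‖A A*‖ = ‖A‖²` this makes `|c| = 1`
unless `A = 0`; a unimodular `c` is `exp (2πiθ)` with `θ` the fractional part of `arg c / 2π`.
-/

theorem Complex.exists_mem_Ico_exp_two_pi_mul_I_mul_eq {c : ℂ} (hc : ‖c‖ = 1) :
    ∃ θ : ℝ, θ ∈ Set.Ico (0 : ℝ) 1 ∧ Complex.exp (2 * π * Complex.I * θ) = c := by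
  set k := ⌊c.arg / (2 * π)⌋
  refine ⟨Int.fract (c.arg / (2 * π)), ⟨Int.fract_nonneg _, Int.fract_lt_one _⟩, ?_⟩
  have hθ : 2 * π * Complex.I * (Int.fract (c.arg / (2 * π)) : ℝ)
      = c.arg * Complex.I - k * (2 * π * Complex.I) := by
    rw [Int.fract, Complex.ofReal_sub, Complex.ofReal_div]
    push_cast
    field_simp
    ring
  rw [hθ, Complex.exp_sub, Complex.exp_int_mul_two_pi_mul_I, div_one]
  simpa [hc] using Complex.norm_mul_exp_arg_mul_I c

theorem norm_eq_one_of_smul_mul_star_smul_eq {𝕜 E : Type*} [NormedField 𝕜]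
    [NonUnitalNormedRing E] [StarRing E] [CStarRing E] [NormedSpace 𝕜 E] {a : E} {c : 𝕜}
    (ha : a ≠ 0) (h : c • a * star (c • a) = a * star a) : ‖c‖ = 1 := by
  have hsq : (‖c‖ * ‖a‖) * (‖c‖ * ‖a‖) = ‖a‖ * ‖a‖ := by
    rw [← norm_smul, ← CStarRing.norm_self_mul_star, h, CStarRing.norm_self_mul_star]
  have hc : ‖c‖ * ‖c‖ = 1 :=
    mul_right_cancel₀ (mul_self_pos.mpr (norm_ne_zero_iff.mpr ha)).ne' (by linear_combination hsq)
  nlinarith [norm_nonneg c]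

section InnerProductSpace

variable {𝕜 E F : Type*} [RCLike 𝕜]
  [NormedAddCommGroup E] [InnerProductSpace 𝕜 E] [NormedAddCommGroup F] [InnerProductSpace 𝕜 F]

theorem ContinuousLinearMap.exists_eq_smul_of_inner_smul_eq {A B : E →L[𝕜] F} (hA : A ≠ 0)
    (h : ∀ x y z, ⟪A y, z⟫_𝕜 • A x = ⟪B y, z⟫_𝕜 • B x) : ∃ c : 𝕜, B = c • A := by
  obtain ⟨x₀, hx₀⟩ : ∃ x₀, A x₀ ≠ 0 := by
    by_contra! hc
    exact hA (ContinuousLinearMap.ext hc)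
  have hAA : ⟪A x₀, A x₀⟫_𝕜 ≠ 0 := inner_self_ne_zero.mpr hx₀
  have hBA : ⟪B x₀, A x₀⟫_𝕜 ≠ 0 := by
    intro hz
    have := h x₀ x₀ (A x₀)
    rw [hz, zero_smul, smul_eq_zero] at this
    tauto
  refine ⟨⟪A x₀, A x₀⟫_𝕜 / ⟪B x₀, A x₀⟫_𝕜, ContinuousLinearMap.ext fun x => ?_⟩
  rw [smul_apply, div_eq_inv_mul, mul_smul, eq_inv_smul_iff₀ hBA]
  exact (h x x₀ (A x₀)).symm

theorem ContinuousLinearMap.mul_smulRight_innerSL_mul_star_apply [CompleteSpace E]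
    (A : E →L[𝕜] E) (x y z : E) :
    (A * (innerSL 𝕜 y).smulRight x * star A) z = ⟪A y, z⟫_𝕜 • A x := by
  simp [ContinuousLinearMap.star_eq_adjoint, ContinuousLinearMap.adjoint_inner_right]

end InnerProductSpace

/-- Let `H` be a complex Hilbert space and `A, B` bounded linear operators
on `H` such that `A T A* = B T B*` for every bounded linear operator `T` on `H`.  Then there
exists `θ ∈ [0, 1)` with `B = exp (2πiθ) • A`. -/
theorem stmt7 {H : Type*} [NormedAddCommGroup H] [InnerProductSpace ℂ H] [CompleteSpace H]
    (A B : H →L[ℂ] H) (h : ∀ T : H →L[ℂ] H, A * T * star A = B * T * star B) :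
    ∃ θ : ℝ, θ ∈ Set.Ico (0 : ℝ) 1 ∧
      B = Complex.exp (2 * π * Complex.I * θ) • A := by
  have hId : A * star A = B * star B := by simpa using h 1
  obtain ⟨c, hc, rfl⟩ : ∃ c : ℂ, ‖c‖ = 1 ∧ B = c • A := by
    by_cases hA : A = 0
    · refine ⟨1, norm_one, ?_⟩
      rw [hA, zero_mul, eq_comm, CStarRing.mul_star_self_eq_zero_iff] at hId
      rw [hId, hA, smul_zero]
    · obtain ⟨c, rfl⟩ := ContinuousLinearMap.exists_eq_smul_of_inner_smul_eq hA fun x y z => by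
        simpa only [ContinuousLinearMap.mul_smulRight_innerSL_mul_star_apply] using
          DFunLike.congr_fun (h ((innerSL ℂ y).smulRight x)) z
      exact ⟨c, norm_eq_one_of_smul_mul_star_smul_eq hA hId.symm, rfl⟩
  obtain ⟨θ, hθ, hexp⟩ := Complex.exists_mem_Ico_exp_two_pi_mul_I_mul_eq hc
  exact ⟨θ, hθ, by rw [hexp]⟩
end
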